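/- arXiv:2001.07356 — 2 statements merged into one kernel-verified Lean document; each statement's English description precedes it below -/
import Mathlib

section
/- If H(x) = tanh(x/√2), then for all 0 < z ≤ y one has y·H'(y)·H(z) - z·H(y)·H'(z) ≤ 0. -/
noncomputable def H : ℝ → ℝ := fun x => Real.tanh (x / Real.sqrt 2)

lemma hasDerivAt_tanh' (x : ℝ) : HasDerivAt Real.tanh (1 / Real.cosh x ^ 2) x := by
  have h : HasDerivAt (fun x => Real.sinh x / Real.cosh x)
      ((Real.cosh x * Real.cosh x - Real.sinh x * Real.sinh x) / Real.cosh x ^ 2) x :=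
    (Real.hasDerivAt_sinh x).div (Real.hasDerivAt_cosh x) (ne_of_gt (Real.cosh_pos x))
  have h1 : Real.cosh x * Real.cosh x - Real.sinh x * Real.sinh x = 1 := by
    have := Real.cosh_sq_sub_sinh_sq x
    nlinarith
  rw [h1] at h
  have h2 : Real.tanh = fun x => Real.sinh x / Real.cosh x :=
    funext Real.tanh_eq_sinh_div_cosh
  rw [h2]
  exact h

lemma convexOn_sinh : ConvexOn ℝ (Set.Ici (0:ℝ)) Real.sinh := by
  apply MonotoneOn.convexOn_of_deriv (convex_Ici 0) Real.continuous_sinh.continuousOn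
    Real.differentiable_sinh.differentiableOn
  intro a ha b hb hab
  rw [Real.deriv_sinh]
  rw [interior_Ici] at ha hb
  exact Real.cosh_le_cosh.2 (by rw [abs_of_pos ha, abs_of_pos hb]; exact hab)

lemma key (s t : ℝ) (hs : 0 < s) (hst : s ≤ t) :
    t * Real.sinh s ≤ s * Real.sinh t := by
  have ht : 0 < t := lt_of_lt_of_le hs hst
  have hst1 : s / t ≤ 1 := (div_le_one ht).2 hst
  have h := convexOn_sinh.2 (Set.mem_Ici.2 ht.le) (Set.mem_Ici.2 (le_refl (0:ℝ)))
    (show (0:ℝ) ≤ s / t by positivity)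
    (show (0:ℝ) ≤ 1 - s / t by linarith)
    (show s / t + (1 - s / t) = 1 by ring)
  simp only [smul_eq_mul, Real.sinh_zero, mul_zero, add_zero] at h
  rw [div_mul_cancel₀ s ht.ne'] at h
  have h2 := mul_le_mul_of_nonneg_left h ht.le
  calc t * Real.sinh s ≤ t * (s / t * Real.sinh t) := h2
    _ = s * Real.sinh t := by field_simp

/-- If `H(x) = tanh(x/√2)`, then for all `0 < z ≤ y` one has
`y·H'(y)·H(z) - z·H(y)·H'(z) ≤ 0`. -/
theorem stmt_4 : ∀ y z : ℝ, 0 < z → z ≤ y →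
    y * deriv H y * H z - z * H y * deriv H z ≤ 0 := by
  intro y z hz hzy
  have hs2 : (0:ℝ) < Real.sqrt 2 := Real.sqrt_pos.2 (by norm_num)
  have hderiv : ∀ x : ℝ, deriv H x = 1 / Real.cosh (x / Real.sqrt 2) ^ 2 * (1 / Real.sqrt 2) := by
    intro x
    have h1 : HasDerivAt (fun x : ℝ => x / Real.sqrt 2) (1 / Real.sqrt 2) x := by
      simpa using (hasDerivAt_id x).div_const (Real.sqrt 2)
    exact ((hasDerivAt_tanh' (x / Real.sqrt 2)).comp x h1).deriv
  set a := y / Real.sqrt 2 with ha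
  set b := z / Real.sqrt 2 with hb
  have hbpos : 0 < b := div_pos hz hs2
  have hba : b ≤ a := by rw [ha, hb]; gcongr
  have hapos : 0 < a := lt_of_lt_of_le hbpos hba
  have hkey := key (2 * b) (2 * a) (by linarith) (by linarith)
  rw [Real.sinh_two_mul, Real.sinh_two_mul] at hkey
  have hkey2 : a * (Real.sinh b * Real.cosh b) ≤ b * (Real.sinh a * Real.cosh a) := by
    nlinarith
  have hca := Real.cosh_pos a
  have hcb := Real.cosh_pos b
  have hy : y = Real.sqrt 2 * a := by rw [ha]; field_simp
  have hz' : z = Real.sqrt 2 * b := by rw [hb]; field_simp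
  rw [sub_nonpos, hderiv y, hderiv z]
  simp only [H]
  rw [← ha, ← hb, Real.tanh_eq_sinh_div_cosh, Real.tanh_eq_sinh_div_cosh, hy, hz']
  have e1 : Real.sqrt 2 * a * (1 / Real.cosh a ^ 2 * (1 / Real.sqrt 2)) *
      (Real.sinh b / Real.cosh b)
      = (a * (Real.sinh b * Real.cosh b)) / (Real.cosh a ^ 2 * Real.cosh b ^ 2) := by
    field_simp
  have e2 : Real.sqrt 2 * b * (Real.sinh a / Real.cosh a) *
      (1 / Real.cosh b ^ 2 * (1 / Real.sqrt 2))
      = (b * (Real.sinh a * Real.cosh a)) / (Real.cosh a ^ 2 * Real.cosh b ^ 2) := by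
    field_simp
  rw [e1, e2]
  gcongr
end

section
/- The function ρ₁(z) = H'(z) ∫₀^z ( H'(s)^{-2} ∫_s^∞ τ H'(τ)² dτ ) ds, with H(x) = tanh(x/√2), satisfies -ρ₁'' + (3H² - 1)ρ₁ = z H'(z) on ℝ. -/
open MeasureTheory

noncomputable def ρ₁ : ℝ → ℝ := fun z =>
  deriv H z * ∫ s in (0 : ℝ)..z, ((deriv H s) ^ 2)⁻¹ * ∫ τ in Set.Ioi s, τ * (deriv H τ) ^ 2

/-!
Differentiating `H' = (1 - H²)/√2` twice shows that `H' > 0` solves the homogeneous equation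
`-u'' + V u = 0` with `V = 3H² - 1`. Then `ρ₁ = u ∫₀^z F/u²` with `u = H'` is the
reduction-of-order ansatz, and for every nonvanishing solution `u` and every differentiable `F`
it satisfies `-ρ'' + Vρ = -F'/u`. For `F(s) = ∫_s^∞ τ H'(τ)² dτ` this is `z H'(z)`. The tail
integral converges because `H'` decays like `exp(-√2 |x|)`.
-/

open Real Set Filter Asymptotics

noncomputable def reductionOfOrder (u F : ℝ → ℝ) : ℝ → ℝ := fun z =>
  u z * ∫ s in (0 : ℝ)..z, (u s ^ 2)⁻¹ * F s

theorem deriv_deriv_reductionOfOrder {u u' V F F' : ℝ → ℝ}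
    (hu : ∀ x, HasDerivAt u (u' x) x) (hu' : ∀ x, HasDerivAt u' (V x * u x) x)
    (hu₀ : ∀ x, u x ≠ 0) (hF : ∀ x, HasDerivAt F (F' x) x) (z : ℝ) :
    deriv (deriv (reductionOfOrder u F)) z = V z * reductionOfOrder u F z + F' z / u z := by
  set f : ℝ → ℝ := fun s => (u s ^ 2)⁻¹ * F s
  have hf : ∀ s, HasDerivAt f ((u s ^ 2)⁻¹ * F' s - 2 * u' s / u s ^ 3 * F s) s := by
    intro s
    have := hu₀ s
    refine (((hu s).pow 2).inv (pow_ne_zero 2 this)).mul (hF s) |>.congr_deriv ?_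
    simp only [Pi.pow_apply, Pi.inv_apply]
    field_simp
    ring
  have hf_cont : Continuous f := continuous_iff_continuousAt.2 fun s => (hf s).continuousAt
  have hg : ∀ z, HasDerivAt (fun z => ∫ s in (0 : ℝ)..z, f s) (f z) z := fun z =>
    (hf_cont.integral_hasStrictDerivAt 0 z).hasDerivAt
  have hρ' :
      deriv (reductionOfOrder u F) = fun z => u' z * (∫ s in (0 : ℝ)..z, f s) + u z * f z :=
    funext fun z => ((hu z).mul (hg z)).deriv
  have hρ'' : HasDerivAt (fun z => u' z * (∫ s in (0 : ℝ)..z, f s) + u z * f z) _ z :=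
    ((hu' z).mul (hg z)).add ((hu z).mul (hf z))
  rw [hρ', hρ''.deriv]
  have hz := hu₀ z
  simp only [reductionOfOrder, f]
  field_simp
  ring

theorem hasDerivAt_integral_Ioi {φ : ℝ → ℝ} (hφ : Continuous φ)
    (hint : ∀ a, IntegrableOn φ (Ioi a)) (s : ℝ) :
    HasDerivAt (fun a => ∫ τ in Ioi a, φ τ) (-φ s) s := by
  have h :
      (fun a => ∫ τ in Ioi a, φ τ) = fun a => (∫ τ in Ioi 0, φ τ) - ∫ τ in 0..a, φ τ := by
    funext a
    rw [← intervalIntegral.integral_Ioi_sub_Ioi' (hint 0) (hint a)]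
    ring
  rw [h]
  exact (hφ.integral_hasStrictDerivAt 0 s).hasDerivAt.const_sub _

namespace Real

theorem one_sub_tanh_sq (x : ℝ) : 1 - tanh x ^ 2 = (cosh x ^ 2)⁻¹ := by
  have := (cosh_pos x).ne'
  rw [tanh_eq_sinh_div_cosh]
  field_simp
  linarith [cosh_sq_sub_sinh_sq x]

theorem hasDerivAt_tanh (x : ℝ) : HasDerivAt tanh (1 - tanh x ^ 2) x := by
  have h := (hasDerivAt_sinh x).div (hasDerivAt_cosh x) (cosh_pos x).ne'
  rw [show tanh = sinh / cosh from funext tanh_eq_sinh_div_cosh]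
  refine h.congr_deriv ?_
  rw [Pi.div_apply]
  field_simp

theorem one_sub_tanh_sq_le (x : ℝ) : 1 - tanh x ^ 2 ≤ 4 * exp (-(2 * |x|)) := by
  have hcosh : exp |x| / 2 ≤ cosh x := by
    rw [← cosh_abs, cosh_eq]
    linarith [exp_pos (-|x|)]
  calc 1 - tanh x ^ 2 = (cosh x ^ 2)⁻¹ := one_sub_tanh_sq x
    _ ≤ ((exp |x| / 2) ^ 2)⁻¹ := inv_anti₀ (by positivity) (by gcongr)
    _ = 4 * exp (-(2 * |x|)) := by
      rw [show -(2 * |x|) = -|x| + -|x| by ring, exp_add, exp_neg]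
      field_simp
      ring

end Real

theorem hasDerivAt_H (x : ℝ) : HasDerivAt H ((1 - H x ^ 2) / √2) x := by
  have h : HasDerivAt H ((1 - tanh (x / √2) ^ 2) * (1 / √2)) x :=
    (hasDerivAt_tanh (x / √2)).comp x ((hasDerivAt_id x).div_const √2)
  refine h.congr_deriv ?_
  rw [H]
  ring

theorem deriv_H : deriv H = fun x => (1 - H x ^ 2) / √2 :=
  funext fun x => (hasDerivAt_H x).deriv

theorem deriv_H_pos (x : ℝ) : 0 < deriv H x := by
  rw [deriv_H]
  exact div_pos (sub_pos.2 (tanh_sq_lt_one _)) (by positivity)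

theorem hasDerivAt_deriv_H (x : ℝ) : HasDerivAt (deriv H) (-(√2 * H x * deriv H x)) x := by
  rw [deriv_H]
  refine (((hasDerivAt_H x).pow 2).const_sub 1).div_const √2 |>.congr_deriv ?_
  field_simp
  rw [sq_sqrt zero_le_two]
  ring

/-- The differentiated function is `H''`, so `H'` solves `-u'' + (3H² - 1) u = 0`. -/
theorem hasDerivAt_deriv_deriv_H (x : ℝ) :
    HasDerivAt (fun y => -(√2 * H y * deriv H y)) ((3 * H x ^ 2 - 1) * deriv H x) x := by
  refine (((hasDerivAt_H x).const_mul √2).mul (hasDerivAt_deriv_H x)).neg.congr_deriv ?_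
  rw [deriv_H]
  field_simp
  rw [sq_sqrt zero_le_two]
  ring

theorem continuous_deriv_H : Continuous (deriv H) :=
  continuous_iff_continuousAt.2 fun x => (hasDerivAt_deriv_H x).continuousAt

theorem deriv_H_le (x : ℝ) : deriv H x ≤ 4 * exp (-|x|) := by
  have hx : |x| ≤ 2 * |x / √2| := by
    have hs : 0 < √2 := sqrt_pos.2 two_pos
    rw [abs_div, abs_of_pos hs, mul_div_assoc', le_div_iff₀ hs]
    nlinarith [sq_sqrt zero_le_two, abs_nonneg x, sqrt_nonneg 2]
  rw [deriv_H]
  calc (1 - H x ^ 2) / √2 ≤ 1 - H x ^ 2 :=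
        div_le_self (sub_nonneg.2 (tanh_sq_lt_one _).le) (one_le_sqrt.2 one_le_two)
    _ ≤ 4 * exp (-(2 * |x / √2|)) := one_sub_tanh_sq_le _
    _ ≤ 4 * exp (-|x|) := by gcongr

theorem isBigO_mul_deriv_H_sq :
    (fun τ => τ * deriv H τ ^ 2) =O[atTop] fun τ => exp (-1 * τ) := by
  refine IsBigO.of_bound 16 ?_
  filter_upwards [eventually_ge_atTop 0] with τ hτ
  have hH := deriv_H_le τ
  rw [abs_of_nonneg hτ] at hH
  have := deriv_H_pos τ
  rw [norm_of_nonneg (by positivity), norm_of_nonneg (exp_pos _).le, neg_one_mul]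
  calc τ * deriv H τ ^ 2 ≤ exp τ * (4 * exp (-τ)) ^ 2 := by
        gcongr
        linarith [add_one_le_exp τ]
    _ = 16 * exp (-τ) := by
      rw [exp_neg]
      field_simp
      ring

theorem integrableOn_mul_deriv_H_sq (a : ℝ) :
    IntegrableOn (fun τ => τ * deriv H τ ^ 2) (Ioi a) :=
  integrable_of_isBigO_exp_neg one_pos
    (continuous_id.mul (continuous_deriv_H.pow 2)).continuousOn isBigO_mul_deriv_H_sq

theorem ρ₁_eq_reductionOfOrder :
    ρ₁ = reductionOfOrder (deriv H) fun s => ∫ τ in Ioi s, τ * deriv H τ ^ 2 := rfl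

/-- `ρ₁(z) = H'(z) ∫₀^z ( H'(s)^{-2} ∫_s^∞ τ H'(τ)² dτ ) ds` satisfies
`-ρ₁'' + (3H² - 1)ρ₁ = z H'(z)` on `ℝ`. -/
theorem stmt_13 : ∀ z : ℝ,
    -(deriv (deriv ρ₁) z) + (3 * (H z) ^ 2 - 1) * ρ₁ z = z * deriv H z := by
  intro z
  have hF := hasDerivAt_integral_Ioi (φ := fun τ => τ * deriv H τ ^ 2)
    (continuous_id.mul (continuous_deriv_H.pow 2)) integrableOn_mul_deriv_H_sq
  rw [ρ₁_eq_reductionOfOrder, deriv_deriv_reductionOfOrder hasDerivAt_deriv_H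
    hasDerivAt_deriv_deriv_H (fun x => (deriv_H_pos x).ne') hF z]
  have := (deriv_H_pos z).ne'
  field_simp
  ring
end
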